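/- arXiv:1310.0724 — 5 statements merged into one kernel-verified Lean document; each statement's English description precedes it below -/
import Mathlib

section
/- The set of monomials {a^i b^j : i, j ≥ 0} (images in B of the words a^i b^j of the free algebra) is a basis of B as a k-vector space. -/
/-!
STATEMENT 0: The set of monomials {a^i b^j : i, j ≥ 0} (images in B of the words
a^i b^j of the free algebra) is a basis of B as a k-vector space, where
B = k⟨a,b⟩/(ba − ab − (1/2)a²) over a field k of characteristic p > 2.
-/

noncomputable section

variable (k : Type*) [Field k]

/-- The generator `a` of the free algebra `k⟨a,b⟩`. -/
def aF : FreeAlgebra k (Fin 2) := FreeAlgebra.ι k 0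

/-- The generator `b` of the free algebra `k⟨a,b⟩`. -/
def bF : FreeAlgebra k (Fin 2) := FreeAlgebra.ι k 1

/-- The defining relation `ba = ab + (1/2)a²` of `B`. -/
inductive BRel : FreeAlgebra k (Fin 2) → FreeAlgebra k (Fin 2) → Prop
  | rel : BRel (bF k * aF k) (aF k * bF k + (2 : k)⁻¹ • aF k ^ 2)

/-- The algebra `B = k⟨a,b⟩/(ba − ab − (1/2)a²)`. -/
abbrev B := RingQuot (BRel k)

/-- The image of `a` in `B`. -/
def aB : B k := RingQuot.mkAlgHom k (BRel k) (aF k)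

/-- The image of `b` in `B`. -/
def bB : B k := RingQuot.mkAlgHom k (BRel k) (bF k)

/-!
The monomials span: their span contains `1` and is stable under left multiplication by the
generators, since `b aⁱ = aⁱ b + (i/2) aⁱ⁺¹`. They are independent: `B` acts on `k[x, y]`
by `a ↦ x·` and `b ↦ (1/2) x² ∂ₓ + y·`, and `aⁱ bʲ` sends `1` to `xⁱ yʲ`.
-/

open MvPolynomial

section Spanning

variable {R A : Type*} [CommSemiring R] [Semiring A] [Algebra R A]

theorem Submodule.eq_top_of_one_mem_of_mul_mem {s : Set A}
    (hs : Algebra.adjoin R s = ⊤) {S : Submodule R A} (h1 : 1 ∈ S)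
    (hmul : ∀ x ∈ s, ∀ y ∈ S, x * y ∈ S) : S = ⊤ := by
  have key (z : A) : ∀ y ∈ S, z * y ∈ S := by
    have hz : z ∈ Algebra.adjoin R s := hs ▸ Algebra.mem_top
    induction hz using Algebra.adjoin_induction with
    | mem x hx => exact hmul x hx
    | algebraMap r => intro y hy; rw [← Algebra.smul_def]; exact S.smul_mem r hy
    | add u v _ _ hu hv => intro y hy; rw [add_mul]; exact S.add_mem (hu y hy) (hv y hy)
    | mul u v _ _ hu hv => intro y hy; rw [mul_assoc]; exact hu _ (hv y hy)
  exact eq_top_iff.2 fun z _ => by simpa using key z 1 h1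

theorem mul_pow_eq_pow_mul_add_of_mul_eq {x y : A} {c : R} (h : y * x = x * y + c • x ^ 2)
    (n : ℕ) : y * x ^ n = x ^ n * y + (n * c) • x ^ (n + 1) := by
  induction n with
  | zero => simp
  | succ n ih =>
    calc y * x ^ (n + 1) = (x ^ n * y + (n * c) • x ^ (n + 1)) * x := by
          rw [← ih, pow_succ, mul_assoc]
      _ = x ^ n * (y * x) + (n * c) • x ^ (n + 2) := by
          rw [add_mul, smul_mul_assoc, mul_assoc, ← pow_succ]
      _ = x ^ (n + 1) * y + ((n + 1 : ℕ) * c) • x ^ (n + 2) := by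
          rw [h, mul_add, mul_smul_comm, ← mul_assoc, ← pow_succ, ← pow_add, add_assoc,
            ← add_smul]
          congr 2
          push_cast
          ring

theorem span_pow_mul_pow_eq_top {x y : A} {c : R} (hgen : Algebra.adjoin R {x, y} = ⊤)
    (h : y * x = x * y + c • x ^ 2) :
    Submodule.span R (Set.range fun ij : ℕ × ℕ => x ^ ij.1 * y ^ ij.2) = ⊤ := by
  set S := Submodule.span R (Set.range fun ij : ℕ × ℕ => x ^ ij.1 * y ^ ij.2)
  have mem (i j : ℕ) : x ^ i * y ^ j ∈ S := Submodule.subset_span ⟨(i, j), rfl⟩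
  refine Submodule.eq_top_of_one_mem_of_mul_mem hgen (by simpa using mem 0 0) ?_
  rintro z hz w hw
  refine (Submodule.span_le (p := S.comap (LinearMap.mulLeft R z))).2 ?_ hw
  rintro _ ⟨⟨i, j⟩, rfl⟩
  change z * (x ^ i * y ^ j) ∈ S
  obtain hz | hz : z = x ∨ z = y := hz <;> subst z
  · rw [← mul_assoc, ← pow_succ']
    exact mem (i + 1) j
  · rw [← mul_assoc, mul_pow_eq_pow_mul_add_of_mul_eq h, add_mul, mul_assoc, ← pow_succ',
      smul_mul_assoc]
    exact S.add_mem (mem i (j + 1)) (S.smul_mem _ (mem (i + 1) j))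

end Spanning

theorem linearIndependent_X_zero_pow_mul_X_one_pow (R : Type*) [CommSemiring R] :
    LinearIndependent R fun ij : ℕ × ℕ =>
      (X 0 : MvPolynomial (Fin 2) R) ^ ij.1 * X 1 ^ ij.2 := by
  have hinj : Function.Injective fun ij : ℕ × ℕ =>
      Finsupp.single (0 : Fin 2) ij.1 + Finsupp.single 1 ij.2 := fun ij ij' h =>
    Prod.ext (by simpa using DFunLike.congr_fun h 0) (by simpa using DFunLike.congr_fun h 1)
  convert (basisMonomials (Fin 2) R).linearIndependent.comp _ hinj with ij
  simp [X_pow_eq_monomial, monomial_mul]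

section Representation

variable {R : Type*} [CommRing R]

def polyRepB (c : R) : Module.End R (MvPolynomial (Fin 2) R) :=
  c • (LinearMap.mulLeft R (X 0 ^ 2) ∘ₗ (pderiv 0).toLinearMap) + LinearMap.mulLeft R (X 1)

theorem polyRepB_mul_mulLeft_X_zero (c : R) :
    polyRepB c * LinearMap.mulLeft R (X 0) =
      LinearMap.mulLeft R (X 0) * polyRepB c + c • LinearMap.mulLeft R (X 0) ^ 2 := by
  refine LinearMap.ext fun f => ?_
  simp only [polyRepB, Module.End.mul_apply, LinearMap.add_apply, LinearMap.smul_apply,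
    LinearMap.comp_apply, LinearMap.mulLeft_apply, LinearMap.pow_mulLeft, pderiv_mul,
    pderiv_X_self, Derivation.coeFn_coe, smul_eq_C_mul]
  ring

theorem polyRepB_pow_one (c : R) (j : ℕ) : (polyRepB c ^ j) 1 = X 1 ^ j := by
  induction j with
  | zero => simp
  | succ n ih =>
    rw [pow_succ', Module.End.mul_apply, ih]
    simp [polyRepB, Derivation.leibniz_pow, pow_succ']

end Representation

section PresentationOfB

theorem bB_mul_aB : bB k * aB k = aB k * bB k + (2 : k)⁻¹ • aB k ^ 2 := by
  simpa only [aB, bB, map_mul, map_add, map_smul, map_pow] using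
    RingQuot.mkAlgHom_rel k (BRel.rel (k := k))

theorem adjoin_aB_bB : Algebra.adjoin k {aB k, bB k} = ⊤ := by
  have hgen : {aB k, bB k} = RingQuot.mkAlgHom k (BRel k) '' Set.range (FreeAlgebra.ι k) := by
    ext z
    simp [Fin.exists_fin_two, aB, bB, aF, bF, eq_comm]
  rw [hgen, Algebra.adjoin_image, FreeAlgebra.adjoin_range_ι, Algebra.map_top,
    (AlgHom.range_eq_top _).2 (RingQuot.mkAlgHom_surjective k _)]

variable {A : Type*} [Semiring A] [Algebra k A]

def B.lift (x y : A) (h : y * x = x * y + (2 : k)⁻¹ • x ^ 2) : B k →ₐ[k] A :=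
  RingQuot.liftAlgHom k
    ⟨FreeAlgebra.lift k ![x, y], by rintro _ _ ⟨⟩; simpa [aF, bF] using h⟩

variable {k}

@[simp]
theorem B.lift_aB (x y : A) (h : y * x = x * y + (2 : k)⁻¹ • x ^ 2) :
    B.lift k x y h (aB k) = x := by
  simp [B.lift, aB, aF]

@[simp]
theorem B.lift_bB (x y : A) (h : y * x = x * y + (2 : k)⁻¹ • x ^ 2) :
    B.lift k x y h (bB k) = y := by
  simp [B.lift, bB, bF]

end PresentationOfB

def polyRep : B k →ₐ[k] Module.End k (MvPolynomial (Fin 2) k) :=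
  B.lift k _ _ (polyRepB_mul_mulLeft_X_zero (2 : k)⁻¹)

theorem polyRep_pow_mul_pow_one (i j : ℕ) :
    polyRep k (aB k ^ i * bB k ^ j) 1 = X 0 ^ i * X 1 ^ j := by
  simp [polyRep, polyRepB_pow_one, LinearMap.pow_mulLeft]

theorem linearIndependent_aB_pow_mul_bB_pow :
    LinearIndependent k fun ij : ℕ × ℕ => aB k ^ ij.1 * bB k ^ ij.2 := by
  refine .of_comp
    (LinearMap.applyₗ (1 : MvPolynomial (Fin 2) k) ∘ₗ (polyRep k).toLinearMap) ?_
  simpa only [LinearMap.coe_comp, Function.comp_def, AlgHom.toLinearMap_apply,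
    LinearMap.applyₗ_apply_apply, polyRep_pow_mul_pow_one] using
    linearIndependent_X_zero_pow_mul_X_one_pow k

theorem monomials_basis_of_B :
    ∃ 𝒷 : Module.Basis (ℕ × ℕ) k (B k), ∀ ij : ℕ × ℕ, 𝒷 ij = aB k ^ ij.1 * bB k ^ ij.2 :=
  ⟨.mk (linearIndependent_aB_pow_mul_bB_pow k)
    (span_pow_mul_pow_eq_top (adjoin_aB_bB k) (bB_mul_aB k)).ge, Module.Basis.mk_apply _ _⟩

end
end

section
/- The element b^p is central in B. -/
noncomputable section

variable (k : Type*) [Field k]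

lemma base_rel : bB k * aB k = aB k * bB k + (2:k)⁻¹ • aB k ^ 2 := by
  have h := RingQuot.mkAlgHom_rel k (BRel.rel (k := k))
  simpa [aB, bB, map_mul, map_add, map_pow] using h

lemma baPow (m : ℕ) : bB k * aB k ^ m = aB k ^ m * bB k + ((m : k) * (2:k)⁻¹) • aB k ^ (m+1) := by
  induction m with
  | zero => simp
  | succ m ih =>
    have : bB k * aB k ^ (m+1) = (bB k * aB k ^ m) * aB k := by
      rw [mul_assoc, ← pow_succ]
    rw [this, ih, add_mul, smul_mul_assoc, mul_assoc, base_rel, ← pow_succ]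
    rw [mul_add, mul_smul_comm, ← mul_assoc, ← pow_succ, ← pow_add]
    have e : m + 2 = m + 1 + 1 := rfl
    rw [e, add_assoc, ← add_smul]
    push_cast
    ring_nf

def dd : ℕ → ℕ → k := fun n j => ((n.choose j * j.factorial : ℕ) : k) * ((2:k)⁻¹)^j

lemma dd_zero (n : ℕ) : dd k n 0 = 1 := by simp [dd]

lemma dd_rec (n j : ℕ) :
    dd k (n+1) (j+1) = dd k n (j+1) + dd k n j * ((j+1 : ℕ) : k) * (2:k)⁻¹ := by
  simp only [dd, Nat.choose_succ_succ, Nat.factorial_succ, pow_succ]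
  push_cast
  ring

lemma dd_of_lt {n j : ℕ} (h : n < j) : dd k n j = 0 := by
  simp [dd, Nat.choose_eq_zero_of_lt h]

lemma pow_mul_a (n : ℕ) :
    bB k ^ n * aB k = ∑ j ∈ Finset.range (n+1), dd k n j • (aB k ^ (j+1) * bB k ^ (n - j)) := by
  induction n with
  | zero => simp [dd_zero]
  | succ n ih =>
    have lhs1 : bB k ^ (n+1) * aB k
        = ∑ j ∈ Finset.range (n+1),
            (dd k n j • (aB k ^ (j+1) * bB k ^ (n+1-j))
             + (dd k n j * ((j+1:ℕ):k) * (2:k)⁻¹) • (aB k ^ (j+2) * bB k ^ (n-j))) := by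
      rw [pow_succ', mul_assoc, ih, Finset.mul_sum]
      refine Finset.sum_congr rfl fun j hj => ?_
      have hjn : j ≤ n := Nat.lt_succ_iff.mp (Finset.mem_range.mp hj)
      rw [Nat.succ_sub hjn]
      rw [mul_smul_comm, ← mul_assoc, baPow, add_mul, mul_assoc, ← pow_succ',
          smul_mul_assoc, smul_add, smul_smul, ← mul_assoc]
    rw [lhs1, Finset.sum_add_distrib]
    have key : ∀ j, dd k (n+1) j • (aB k ^ (j+1) * bB k ^ (n+1-j))
        = dd k n j • (aB k ^ (j+1) * bB k ^ (n+1-j))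
          + (dd k (n+1) j - dd k n j) • (aB k ^ (j+1) * bB k ^ (n+1-j)) := by
      intro j; rw [← add_smul]; ring_nf
    have split : ∑ j ∈ Finset.range (n+1+1), dd k (n+1) j • (aB k ^ (j+1) * bB k ^ (n+1-j))
        = ∑ j ∈ Finset.range (n+1+1), dd k n j • (aB k ^ (j+1) * bB k ^ (n+1-j))
          + ∑ j ∈ Finset.range (n+1+1), (dd k (n+1) j - dd k n j) • (aB k ^ (j+1) * bB k ^ (n+1-j)) := by
      rw [← Finset.sum_add_distrib]
      exact Finset.sum_congr rfl fun j _ => key j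
    rw [split]
    have e1 : ∑ j ∈ Finset.range (n+1+1), dd k n j • (aB k ^ (j+1) * bB k ^ (n+1-j))
        = ∑ j ∈ Finset.range (n+1), dd k n j • (aB k ^ (j+1) * bB k ^ (n+1-j)) := by
      rw [Finset.sum_range_succ, dd_of_lt k (Nat.lt_succ_self n), zero_smul, add_zero]
    have e2 : ∑ j ∈ Finset.range (n+1+1), (dd k (n+1) j - dd k n j) • (aB k ^ (j+1) * bB k ^ (n+1-j))
        = ∑ j ∈ Finset.range (n+1), (dd k n j * ((j+1:ℕ):k) * (2:k)⁻¹) • (aB k ^ (j+2) * bB k ^ (n-j)) := by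
      rw [Finset.sum_range_succ']
      simp only [dd_zero, sub_self, zero_smul, add_zero]
      refine Finset.sum_congr rfl fun j hj => ?_
      rw [dd_rec, Nat.succ_sub_succ]
      congr 1
      ring
    rw [e1, e2]

lemma dd_p_zero (p : ℕ) [CharP k p] (hp : 2 < p) {j : ℕ} (h1 : 1 ≤ j) (h2 : j ≤ p) :
    dd k p j = 0 := by
  have hprime : p.Prime := CharP.char_is_prime_of_two_le k p (le_of_lt hp)
  have hdvd : p ∣ p.choose j * j.factorial := by
    rcases eq_or_lt_of_le h2 with rfl | hlt
    · simpa using Nat.dvd_factorial (lt_of_lt_of_le (by omega) h2) le_rfl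
    · exact Dvd.dvd.mul_right (hprime.dvd_choose_self (by omega) hlt) _
  have : ((p.choose j * j.factorial : ℕ) : k) = 0 :=
    (CharP.cast_eq_zero_iff k p _).mpr hdvd
  simp [dd, this]

lemma bp_comm_a (p : ℕ) [CharP k p] (hp : 2 < p) :
    bB k ^ p * aB k = aB k * bB k ^ p := by
  rw [pow_mul_a, Finset.sum_range_succ']
  have : ∀ j ∈ Finset.range p,
      dd k p (j+1) • (aB k ^ (j+1+1) * bB k ^ (p - (j+1))) = 0 := by
    intro j hj
    have hj' := Finset.mem_range.mp hj
    rw [dd_p_zero k p hp (by omega) (by omega), zero_smul]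
  rw [Finset.sum_congr rfl this]
  simp [dd_zero]

/-- The element `b^p` is central in `B`. -/
theorem bB_pow_p_central (p : ℕ) [CharP k p] (hp : 2 < p) :
    bB k ^ p ∈ Subalgebra.center k (B k) := by
  rw [Subalgebra.mem_center_iff]
  intro g
  obtain ⟨x, rfl⟩ := RingQuot.mkAlgHom_surjective k (BRel k) g
  induction x using FreeAlgebra.induction with
  | grade0 r => simp [Algebra.commutes]
  | grade1 i =>
    fin_cases i
    · exact (bp_comm_a k p hp).symm
    · show RingQuot.mkAlgHom k (BRel k) (bF k) * bB k ^ p = _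
      rw [show RingQuot.mkAlgHom k (BRel k) (bF k) = bB k from rfl]
      exact (Commute.self_pow _ _)
  | mul x y hx hy => rw [map_mul, mul_assoc, hy, ← mul_assoc, hx, mul_assoc]
  | add x y hx hy => rw [map_add, add_mul, hx, hy, mul_add]


end
end

section
/- The set of monomials {a^i b^j : 0 ≤ i ≤ p−1, 0 ≤ j ≤ p−1} (images in A of the corresponding words in the free algebra) is a basis of A as a k-vector space; in particular A is finite dimensional over k with dim_k A = p². -/
noncomputable section

variable (k : Type*) [Field k]

/-- The defining relations `a^p = 0`, `b^p = 0`, `ba = ab + (1/2)a²` of `A`. -/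
inductive ARel (p : ℕ) : FreeAlgebra k (Fin 2) → FreeAlgebra k (Fin 2) → Prop
  | apow : ARel p (aF k ^ p) 0
  | bpow : ARel p (bF k ^ p) 0
  | rel : ARel p (bF k * aF k) (aF k * bF k + (2 : k)⁻¹ • aF k ^ 2)

/-- The algebra `A = k⟨a,b⟩/(a^p, b^p, ba − ab − (1/2)a²)`. -/
abbrev A (p : ℕ) := RingQuot (ARel k p)

/-- The image of `a` in `A`. -/
def aA (p : ℕ) : A k p := RingQuot.mkAlgHom k (ARel k p) (aF k)

/-- The image of `b` in `A`. -/
def bA (p : ℕ) : A k p := RingQuot.mkAlgHom k (ARel k p) (bF k)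

/-! The monomials span: their span contains `1` and is stable under left multiplication by the
generators, since `a · aⁱbʲ = aⁱ⁺¹bʲ`, `b · aⁱbʲ = aⁱbʲ⁺¹ + (i/2) aⁱ⁺¹bʲ` and `aᵖ = bᵖ = 0`.
They are independent because these formulas define an action of `A` on `k^(p × p)`, the
would-be left regular representation in the monomial basis, and `aⁱbʲ` sends `e₀₀` to `eᵢⱼ`.
The only relation that needs checking there is `bᵖ = 0`: `b` acts as a sum of two commuting
operators that are nilpotent of order `p`, and `k` has characteristic `p`. -/

open Module

section WeightedShift

variable {R M : Type*} [CommSemiring R] [AddCommMonoid M] [Module R M] {n : ℕ}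

def weightedShift (w : ℕ → R) : Module.End R (Fin n → M) where
  toFun f i := if h : (i : ℕ) = 0 then 0 else w (i - 1) • f ⟨i - 1, by omega⟩
  map_add' f g := by ext i; by_cases h : (i : ℕ) = 0 <;> simp [h]
  map_smul' c f := by ext i; by_cases h : (i : ℕ) = 0 <;> simp [h, smul_comm c]

lemma weightedShift_apply (w : ℕ → R) (f : Fin n → M) (i : Fin n) :
    weightedShift w f i = if h : (i : ℕ) = 0 then 0 else w (i - 1) • f ⟨i - 1, by omega⟩ :=
  rfl

lemma weightedShift_pow_apply_of_lt (w : ℕ → R) (f : Fin n → M) {m : ℕ} {i : Fin n}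
    (hi : (i : ℕ) < m) : (weightedShift w ^ m) f i = 0 := by
  induction m generalizing i with
  | zero => omega
  | succ m ih =>
    rw [pow_succ', Module.End.mul_apply, weightedShift_apply]
    split_ifs
    · rfl
    · rw [ih (by simp; omega), smul_zero]

lemma weightedShift_pow_self (w : ℕ → R) :
    (weightedShift w : Module.End R (Fin n → M)) ^ n = 0 :=
  LinearMap.ext fun f => funext fun i => weightedShift_pow_apply_of_lt w f i.isLt

lemma weightedShift_single (w : ℕ → R) (i : Fin n) (x : M) (h : (i : ℕ) + 1 < n) :
    weightedShift w (Pi.single i x) = Pi.single ⟨i + 1, h⟩ (w i • x) := by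
  ext ⟨l, hl⟩
  rw [weightedShift_apply]
  obtain rfl | hne := eq_or_ne l (i + 1)
  · simp
  · obtain rfl | hne' : l = 0 ∨ l - 1 ≠ i := by omega
    · simp [Fin.ext_iff]
    · simp [hne, hne', Fin.ext_iff]

lemma weightedShift_single_eq_zero {w : ℕ → R} (i : Fin n) (x : M) (hw : w i = 0) :
    weightedShift w (Pi.single i x) = 0 := by
  ext ⟨l, hl⟩
  rw [weightedShift_apply]
  by_cases h : l - 1 = i
  · split_ifs
    · rfl
    · simp only [h, hw, zero_smul, Pi.zero_apply]
  · split_ifs <;> simp [Fin.ext_iff, h]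

lemma weightedShift_one_pow_single (i : Fin n) (x : M) (m : ℕ) (h : (i : ℕ) + m < n) :
    (weightedShift (1 : ℕ → R) ^ m) (Pi.single i x) = Pi.single ⟨i + m, h⟩ x := by
  induction m with
  | zero => rfl
  | succ m ih =>
    rw [pow_succ', Module.End.mul_apply, ih (by omega), weightedShift_single _ _ _ (by simpa),
      Pi.one_apply, one_smul]
    rfl

lemma LinearMap.compLeft_single {I : Type*} [DecidableEq I] (g : Module.End R M) (i : I)
    (x : M) : g.compLeft I (Pi.single i x) = Pi.single i (g x) :=
  funext (Pi.apply_single (fun _ => g) (fun _ => map_zero g) i x)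

lemma LinearMap.compLeft_pow (g : Module.End R M) (I : Type*) (m : ℕ) :
    g.compLeft I ^ m = (g ^ m).compLeft I := by
  induction m with
  | zero => rfl
  | succ m ih => rw [pow_succ, ih, pow_succ]; rfl

lemma commute_weightedShift_compLeft (w : ℕ → R) (g : Module.End R M) :
    Commute (weightedShift w) (g.compLeft (Fin n)) := by
  refine LinearMap.ext fun f => funext fun i => ?_
  simp only [Module.End.mul_apply, weightedShift_apply, LinearMap.compLeft_apply,
    Function.comp_apply]
  by_cases h : (i : ℕ) = 0 <;> simp [h]

end WeightedShift

theorem Submodule.span_eq_top_of_mul_mem {R B : Type*} [CommSemiring R] [Semiring B]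
    [Algebra R B] {s t : Set B} (hs : Algebra.adjoin R s = ⊤) (h1 : 1 ∈ span R t)
    (hmul : ∀ x ∈ s, ∀ y ∈ t, x * y ∈ span R t) : span R t = ⊤ := by
  have hmul_span (x : B) (hx : x ∈ s) : ∀ y ∈ span R t, x * y ∈ span R t :=
    span_le (p := (span R t).comap (LinearMap.mulLeft R x)) |>.mpr (hmul x hx)
  have key : ∀ x ∈ Algebra.adjoin R s, ∀ y ∈ span R t, x * y ∈ span R t := by
    intro x hx
    induction hx using Algebra.adjoin_induction with
    | mem x hx => exact hmul_span x hx
    | algebraMap r => intro y hy; rw [← Algebra.smul_def]; exact smul_mem _ r hy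
    | add x z _ _ hx hz => intro y hy; rw [add_mul]; exact add_mem (hx y hy) (hz y hy)
    | mul x z _ _ hx hz => intro y hy; rw [mul_assoc]; exact hx _ (hz y hy)
  refine eq_top_iff.2 fun x _ => ?_
  simpa using key x (hs ▸ Algebra.mem_top) 1 h1

namespace A

section Spanning

variable {p : ℕ}

lemma aA_pow_eq_zero : aA k p ^ p = 0 := by
  simpa [aA] using RingQuot.mkAlgHom_rel k (ARel.apow (k := k) (p := p))

lemma bA_pow_eq_zero : bA k p ^ p = 0 := by
  simpa [bA] using RingQuot.mkAlgHom_rel k (ARel.bpow (k := k) (p := p))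

lemma bA_mul_aA : bA k p * aA k p = aA k p * bA k p + (2 : k)⁻¹ • aA k p ^ 2 := by
  simpa [aA, bA] using RingQuot.mkAlgHom_rel k (ARel.rel (k := k) (p := p))

lemma bA_mul_aA_pow (i : ℕ) :
    bA k p * aA k p ^ i = aA k p ^ i * bA k p + ((i : k) / 2) • aA k p ^ (i + 1) := by
  induction i with
  | zero => simp
  | succ i ih =>
    calc bA k p * aA k p ^ (i + 1) = (bA k p * aA k p ^ i) * aA k p := by
          rw [pow_succ, mul_assoc]
      _ = aA k p ^ i * (bA k p * aA k p) + ((i : k) / 2) • aA k p ^ (i + 2) := by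
        rw [ih, add_mul, smul_mul_assoc, mul_assoc, ← pow_succ]
      _ = _ := by
        rw [bA_mul_aA]
        simp only [mul_add, mul_smul_comm, ← mul_assoc, ← pow_succ, ← pow_add]
        push_cast
        module

lemma adjoin_aA_bA : Algebra.adjoin k {aA k p, bA k p} = ⊤ := by
  have h : {aA k p, bA k p} = RingQuot.mkAlgHom k (ARel k p) '' Set.range (FreeAlgebra.ι k) := by
    ext; simp [Fin.exists_fin_two, aA, aF, bA, bF, eq_comm]
  rw [h, ← AlgHom.map_adjoin, FreeAlgebra.adjoin_range_ι, Algebra.map_top, AlgHom.range_eq_top]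
  exact RingQuot.mkAlgHom_surjective k (ARel k p)

variable (p) in
def monomial (ij : Fin p × Fin p) : A k p := aA k p ^ (ij.1 : ℕ) * bA k p ^ (ij.2 : ℕ)

lemma aA_pow_mul_bA_pow_mem_span (i j : ℕ) :
    aA k p ^ i * bA k p ^ j ∈ Submodule.span k (Set.range (monomial k p)) := by
  by_cases h : i < p ∧ j < p
  · exact Submodule.subset_span ⟨(⟨i, h.1⟩, ⟨j, h.2⟩), rfl⟩
  · rcases not_and_or.1 h with hi | hj
    · simp [pow_eq_zero_of_le (not_lt.1 hi) (aA_pow_eq_zero k)]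
    · simp [pow_eq_zero_of_le (not_lt.1 hj) (bA_pow_eq_zero k)]

lemma span_monomial_eq_top : Submodule.span k (Set.range (monomial k p)) = ⊤ := by
  refine Submodule.span_eq_top_of_mul_mem (adjoin_aA_bA k) ?_ ?_
  · simpa using aA_pow_mul_bA_pow_mem_span k (p := p) 0 0
  · rintro x (rfl | rfl) _ ⟨⟨i, j⟩, rfl⟩
    · simpa [monomial, ← mul_assoc, ← pow_succ'] using aA_pow_mul_bA_pow_mem_span k (i + 1) j
    · rw [monomial, ← mul_assoc, bA_mul_aA_pow, add_mul, mul_assoc, ← pow_succ', smul_mul_assoc]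
      exact Submodule.add_mem _ (aA_pow_mul_bA_pow_mem_span k _ _)
        (Submodule.smul_mem _ _ (aA_pow_mul_bA_pow_mem_span k _ _))

end Spanning

section Representation

variable (p : ℕ)

def aEnd : Module.End k (Fin p → Fin p → k) := weightedShift 1

/-- `f i j` is the coefficient of `aⁱbʲ`, and `b · aⁱbʲ = aⁱbʲ⁺¹ + (i/2) aⁱ⁺¹bʲ`. -/
def bEnd : Module.End k (Fin p → Fin p → k) :=
  (weightedShift (1 : ℕ → k)).compLeft (Fin p) + weightedShift fun i => (i : k) / 2

lemma aEnd_pow_eq_zero : aEnd k p ^ p = 0 := weightedShift_pow_self _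

lemma bEnd_mul_aEnd :
    bEnd k p * aEnd k p = aEnd k p * bEnd k p + (2 : k)⁻¹ • aEnd k p ^ 2 := by
  have hD : weightedShift (fun i => (i : k) / 2) * aEnd k p =
      aEnd k p * weightedShift (fun i => (i : k) / 2) + (2 : k)⁻¹ • aEnd k p ^ 2 := by
    refine LinearMap.ext fun f => funext fun ⟨i, hi⟩ => ?_
    rcases i with _ | _ | i <;>
      simp [aEnd, weightedShift_apply, pow_two, smul_smul, div_eq_inv_mul]
    module
  rw [bEnd, add_mul, mul_add, hD, aEnd, ← (commute_weightedShift_compLeft _ _).eq]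
  abel

lemma bEnd_pow_eq_zero [CharP k p] [Fact p.Prime] : bEnd k p ^ p = 0 := by
  have : CharP (Module.End k (Fin p → Fin p → k)) p := charP_of_injective_algebraMap' k p
  rw [bEnd, add_pow_char_of_commute p (commute_weightedShift_compLeft _ _).symm,
    LinearMap.compLeft_pow, weightedShift_pow_self, weightedShift_pow_self, add_zero]
  rfl

lemma bEnd_pow_single_zero [NeZero p] (u : Fin p → k) (j : ℕ) :
    (bEnd k p ^ j) (Pi.single 0 u) = Pi.single 0 ((weightedShift (1 : ℕ → k) ^ j) u) := by
  induction j with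
  | zero => rfl
  | succ j ih =>
    rw [pow_succ', Module.End.mul_apply, ih, bEnd, LinearMap.add_apply,
      weightedShift_single_eq_zero _ _ (by simp), add_zero, LinearMap.compLeft_single,
      pow_succ', Module.End.mul_apply]

variable [CharP k p] [Fact p.Prime]

def toEnd : A k p →ₐ[k] Module.End k (Fin p → Fin p → k) :=
  RingQuot.liftAlgHom k ⟨FreeAlgebra.lift k ![aEnd k p, bEnd k p], fun _ _ h => by
    cases h <;> simp [aF, bF, aEnd_pow_eq_zero, bEnd_pow_eq_zero, bEnd_mul_aEnd]⟩

lemma toEnd_aA : toEnd k p (aA k p) = aEnd k p := by simp [toEnd, aA, aF]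

lemma toEnd_bA : toEnd k p (bA k p) = bEnd k p := by simp [toEnd, bA, bF]

lemma toEnd_monomial_apply_single_zero [NeZero p] (ij : Fin p × Fin p) :
    toEnd k p (monomial k p ij) (Pi.single 0 (Pi.single 0 1)) =
      Pi.single ij.1 (Pi.single ij.2 1) := by
  rw [monomial, map_mul, map_pow, map_pow, toEnd_aA, toEnd_bA, Module.End.mul_apply,
    bEnd_pow_single_zero, weightedShift_one_pow_single 0 _ _ (by simp), aEnd,
    weightedShift_one_pow_single 0 _ _ (by simp)]
  simp

end Representation

lemma linearIndependent_monomial (p : ℕ) [CharP k p] [NeZero p] :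
    LinearIndependent k (monomial k p) := by
  have := CharP.char_is_prime_of_pos k p
  let φ := LinearMap.applyₗ (R := k) (Pi.single 0 (Pi.single 0 1) : Fin p → Fin p → k) ∘ₗ
    (toEnd k p).toLinearMap
  have hφ : φ ∘ monomial k p =
      (Pi.basis fun _ => Pi.basisFun k (Fin p)).reindex (Equiv.sigmaEquivProd _ _) := by
    funext ij
    simp [φ, toEnd_monomial_apply_single_zero]
  exact LinearIndependent.of_comp φ (hφ ▸ Basis.linearIndependent _)

end A

/-- The monomials `a^i b^j`, `0 ≤ i,j ≤ p−1`, form a `k`-vector space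
basis of `A`; in particular `A` is finite dimensional with `dim_k A = p²`. -/
theorem monomials_basis_of_A (p : ℕ) [CharP k p] (hp : 2 < p) :
    (∃ 𝒷 : Module.Basis (Fin p × Fin p) k (A k p),
      ∀ ij : Fin p × Fin p, 𝒷 ij = aA k p ^ (ij.1 : ℕ) * bA k p ^ (ij.2 : ℕ)) ∧
    Module.Finite k (A k p) ∧ Module.finrank k (A k p) = p ^ 2 := by
  have : NeZero p := ⟨by omega⟩
  let 𝒷 := Basis.mk (A.linearIndependent_monomial k p) (A.span_monomial_eq_top k).ge
  refine ⟨⟨𝒷, Basis.mk_apply _ _⟩, .of_basis 𝒷, ?_⟩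
  rw [finrank_eq_card_basis 𝒷, Fintype.card_prod, Fintype.card_fin, sq]

end
end

section
/- There is a k-algebra automorphism g of A determined by g(a) = a and g(b) = b − a; it satisfies g^p = id and g ≠ id (so g has order exactly p), and it preserves the augmentation, i.e., ε ∘ g = ε. -/
noncomputable section

variable (k : Type*) [Field k]

namespace AuxG

variable {k} (p : ℕ)

lemma apow_zero : aA k p ^ p = 0 := by
  have h := RingQuot.mkAlgHom_rel k (ARel.apow : ARel k p (aF k ^ p) 0)
  simpa [aA, map_pow] using h

lemma bpow_zero : bA k p ^ p = 0 := by
  have h := RingQuot.mkAlgHom_rel k (ARel.bpow : ARel k p (bF k ^ p) 0)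
  simpa [bA, map_pow] using h

lemma rel_ba : bA k p * aA k p = aA k p * bA k p + (2:k)⁻¹ • aA k p ^ 2 := by
  have h := RingQuot.mkAlgHom_rel k (ARel.rel : ARel k p _ _)
  simpa [aA, bA, map_mul, map_add, map_smul, map_pow] using h

lemma comm_pow (n : ℕ) :
    bA k p * aA k p ^ n = aA k p ^ n * bA k p + ((n:k) * (2:k)⁻¹) • aA k p ^ (n+1) := by
  set a := aA k p with ha
  set b := bA k p with hb
  induction n with
  | zero => simp
  | succ n ih =>
    have step : b * a ^ (n+1) = (b * a ^ n) * a := by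
      rw [mul_assoc, ← pow_succ]
    have q1 : (a^n * b) * a = a^(n+1) * b + (2:k)⁻¹ • a^(n+2) := by
      rw [mul_assoc, rel_ba, mul_add, ← mul_assoc, ← pow_succ, mul_smul_comm, ← pow_add]
    rw [step, ih, add_mul, q1, smul_mul_assoc, ← pow_succ,
      show n + 1 + 1 = n + 2 from rfl]
    push_cast
    match_scalars <;> ring

variable (h2 : (2:k) ≠ 0)
include h2

lemma comm_sq : bA k p * aA k p ^ 2 = aA k p ^ 2 * bA k p + aA k p ^ 3 := by
  rw [comm_pow p 2]
  have h21 : (((2:ℕ)):k) * (2:k)⁻¹ = 1 := by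
    push_cast
    exact mul_inv_cancel₀ h2
  rw [h21, one_smul]

lemma cpow (m : ℕ) :
    (bA k p - aA k p) ^ (m+2) = bA k p ^ (m+2) - ((m:k)+2) • (aA k p * bA k p ^ (m+1))
      + ((((m:k)+2) * ((m:k)+1)) * ((2:k)⁻¹)^2) • (aA k p ^ 2 * bA k p ^ m) := by
  set a := aA k p with ha
  set b := bA k p with hb
  induction m with
  | zero =>
    have hsq : (b - a)^2 = b*b - b*a - a*b + a*a := by
      rw [sq, mul_sub, sub_mul, sub_mul]; abel
    rw [hsq, rel_ba, show b^(0+2) = b*b by rw [pow_succ, pow_one],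
      show a*a = a^2 from (sq a).symm, pow_zero, mul_one, pow_one]
    push_cast
    match_scalars <;> field_simp <;> ring
  | succ m ih =>
    have hstep : (b - a)^(m+1+2) = (b-a) * (b-a)^(m+2) := by
      rw [← pow_succ']
    rw [hstep, ih]
    have e1 : b * b^(m+2) = b^(m+3) := (pow_succ' b (m+2)).symm
    have e2 : b * (a * b^(m+1)) = a * b^(m+2) + (2:k)⁻¹ • (a^2 * b^(m+1)) := by
      rw [← mul_assoc, rel_ba, add_mul, smul_mul_assoc, mul_assoc, ← pow_succ']
    have e3 : b * (a^2 * b^m) = a^2 * b^(m+1) + a^3 * b^m := by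
      rw [← mul_assoc, comm_sq p h2, add_mul, mul_assoc, ← pow_succ']
    have e4 : a * (a * b^(m+1)) = a^2 * b^(m+1) := by
      rw [← mul_assoc, ← sq]
    have e5 : a * (a^2 * b^m) = a^3 * b^m := by
      rw [← mul_assoc, ← pow_succ']
    simp only [mul_add, mul_sub, sub_mul, add_mul, mul_smul_comm, smul_mul_assoc]
    rw [e1, e2, e3, e4, e5, show m+1+1 = m+2 from rfl, show m+1+2 = m+3 from rfl]
    push_cast
    match_scalars <;> field_simp <;> ring

lemma cpow_zero [CharP k p] (hp : 2 < p) : (bA k p - aA k p) ^ p = 0 := by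
  obtain ⟨m, rfl⟩ : ∃ m, p = m + 2 := ⟨p - 2, by omega⟩
  rw [cpow (m+2) h2 m]
  have h0 : ((m:k)+2) = 0 := by
    have := CharP.cast_eq_zero k (m+2)
    push_cast at this
    exact this
  rw [h0, bpow_zero, zero_smul, zero_mul, zero_mul, zero_smul]
  simp

omit h2

lemma algHom_ext {B : Type*} [Semiring B] [Algebra k B] (f g : A k p →ₐ[k] B)
    (hfa : f (aA k p) = g (aA k p)) (hfb : f (bA k p) = g (bA k p)) : f = g := by
  have h : f.comp (RingQuot.mkAlgHom k (ARel k p)) = g.comp (RingQuot.mkAlgHom k (ARel k p)) := by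
    apply FreeAlgebra.hom_ext
    funext i
    fin_cases i
    · exact hfa
    · exact hfb
  apply AlgHom.ext
  intro x
  obtain ⟨y, rfl⟩ := RingQuot.mkAlgHom_surjective k (ARel k p) x
  exact AlgHom.congr_fun h y

end AuxG

/-- There is a `k`-algebra automorphism `g` of `A` determined by
`g(a) = a` and `g(b) = b − a`; it satisfies `g^p = 1` and `g ≠ 1` (so `g` has
order exactly `p`), and it preserves the augmentation `ε` (the algebra map with
`ε(a) = ε(b) = 0`), i.e. `ε ∘ g = ε`. -/
theorem exists_automorphism_g_of_A (p : ℕ) [CharP k p] (hp : 2 < p) :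
    ∃ g : A k p ≃ₐ[k] A k p, g (aA k p) = aA k p ∧ g (bA k p) = bA k p - aA k p ∧
      (∀ g' : A k p ≃ₐ[k] A k p,
        g' (aA k p) = aA k p → g' (bA k p) = bA k p - aA k p → g' = g) ∧
      g ^ p = 1 ∧ g ≠ 1 ∧
      (∀ ε : A k p →ₐ[k] k, ε (aA k p) = 0 → ε (bA k p) = 0 → ∀ x, ε (g x) = ε x) := by
  have h2 : (2:k) ≠ 0 := by
    intro h
    have hd := (CharP.cast_eq_zero_iff k p 2).mp (by exact_mod_cast h)
    have := Nat.le_of_dvd (by norm_num) hd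
    omega
  -- the hom φ : a ↦ a, b ↦ b - a
  set F : FreeAlgebra k (Fin 2) →ₐ[k] A k p :=
    FreeAlgebra.lift k ![aA k p, bA k p - aA k p] with hF
  have Fa : F (aF k) = aA k p := by
    simp [hF, aF, FreeAlgebra.lift_ι_apply]
  have Fb : F (bF k) = bA k p - aA k p := by
    simp [hF, bF, FreeAlgebra.lift_ι_apply]
  have hrel : ∀ ⦃x y : FreeAlgebra k (Fin 2)⦄, ARel k p x y → F x = F y := by
    intro x y r
    cases r with
    | apow => rw [map_pow, Fa, map_zero, AuxG.apow_zero]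
    | bpow => rw [map_pow, Fb, map_zero, AuxG.cpow_zero p h2 hp]
    | rel =>
      rw [map_mul, map_add, map_mul, map_smul, map_pow, Fa, Fb]
      rw [sub_mul, AuxG.rel_ba, mul_sub, ← sq]
      match_scalars <;> ring
  set φ : A k p →ₐ[k] A k p := RingQuot.liftAlgHom k ⟨F, hrel⟩ with hφ
  have φa : φ (aA k p) = aA k p :=
    (RingQuot.liftAlgHom_mkAlgHom_apply k F hrel (aF k)).trans Fa
  have φb : φ (bA k p) = bA k p - aA k p :=
    (RingQuot.liftAlgHom_mkAlgHom_apply k F hrel (bF k)).trans Fb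
  -- powers of φ
  have φpow : ∀ n : ℕ, (φ^n) (aA k p) = aA k p ∧ (φ^n) (bA k p) = bA k p - (n:k) • aA k p := by
    intro n
    induction n with
    | zero => simp
    | succ n ih =>
      have hmul : ∀ x, (φ^(n+1)) x = (φ^n) (φ x) := by
        intro x; rw [pow_succ, AlgHom.mul_apply]
      constructor
      · rw [hmul, φa, ih.1]
      · rw [hmul, φb, map_sub, ih.1, ih.2]
        push_cast
        match_scalars <;> ring
  have φp : φ ^ p = AlgHom.id k (A k p) := by
    apply AuxG.algHom_ext
    · exact (φpow p).1
    · rw [(φpow p).2, CharP.cast_eq_zero k p, zero_smul, sub_zero]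
      rfl
  have hppos : p - 1 + 1 = p := by omega
  have hinv1 : φ * φ^(p-1) = AlgHom.id k (A k p) := by
    rw [← pow_succ', hppos, φp]
  have hinv2 : φ^(p-1) * φ = AlgHom.id k (A k p) := by
    rw [← pow_succ, hppos, φp]
  set g : A k p ≃ₐ[k] A k p := AlgEquiv.ofAlgHom φ (φ^(p-1)) hinv1 hinv2 with hg
  have gcoe : ∀ x, g x = φ x := fun _ => rfl
  -- aA ≠ 0 via dual numbers
  have haA : aA k p ≠ 0 := by
    set G : FreeAlgebra k (Fin 2) →ₐ[k] DualNumber k :=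
      FreeAlgebra.lift k ![DualNumber.eps, 0] with hG
    have Ga : G (aF k) = DualNumber.eps := by simp [hG, aF, FreeAlgebra.lift_ι_apply]
    have Gb : G (bF k) = 0 := by simp [hG, bF, FreeAlgebra.lift_ι_apply]
    have heps2 : (DualNumber.eps : DualNumber k)^2 = 0 := by
      rw [sq, DualNumber.eps_mul_eps]
    have hepsp : (DualNumber.eps : DualNumber k)^p = 0 := by
      obtain ⟨m, rfl⟩ : ∃ m, p = m + 2 := ⟨p - 2, by omega⟩
      rw [pow_add, heps2, mul_zero]
    have hrelG : ∀ ⦃x y : FreeAlgebra k (Fin 2)⦄, ARel k p x y → G x = G y := by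
      intro x y r
      cases r with
      | apow => rw [map_pow, Ga, map_zero, hepsp]
      | bpow => rw [map_pow, Gb, map_zero, zero_pow (by omega)]
      | rel =>
        rw [map_mul, map_add, map_mul, map_smul, map_pow, Ga, Gb, heps2]
        simp
    set χ : A k p →ₐ[k] DualNumber k := RingQuot.liftAlgHom k ⟨G, hrelG⟩ with hχ
    have hχa : χ (aA k p) = DualNumber.eps :=
      (RingQuot.liftAlgHom_mkAlgHom_apply k G hrelG (aF k)).trans Ga
    intro h
    rw [h, map_zero] at hχa
    have hsnd := congrArg TrivSqZeroExt.snd hχa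
    rw [DualNumber.eps, TrivSqZeroExt.snd_inr, TrivSqZeroExt.snd_zero] at hsnd
    exact one_ne_zero hsnd.symm
  refine ⟨g, by rw [gcoe, φa], by rw [gcoe, φb], ?_, ?_, ?_, ?_⟩
  · intro g' ha hb
    have hco : (g' : A k p →ₐ[k] A k p) = φ :=
      AuxG.algHom_ext p _ _ (by simpa using ha.trans φa.symm)
        (by simpa using hb.trans φb.symm)
    ext x
    rw [gcoe]
    simpa using AlgHom.congr_fun hco x
  · have gpow : ∀ n x, (g^n) x = (φ^n) x := by
      intro n
      induction n with
      | zero => intro x; simp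
      | succ n ih =>
        intro x
        rw [pow_succ, pow_succ, AlgEquiv.mul_apply, AlgHom.mul_apply, ih, gcoe]
    ext x
    rw [gpow p x, φp, AlgEquiv.one_apply]
    rfl
  · intro h
    have hb : g (bA k p) = bA k p := by rw [h, AlgEquiv.one_apply]
    rw [gcoe, φb] at hb
    exact haA (sub_eq_self.mp hb)
  · intro ε ha hb x
    have hco : ε.comp φ = ε := by
      apply AuxG.algHom_ext
      · rw [AlgHom.comp_apply, φa]
      · rw [AlgHom.comp_apply, φb, map_sub, ha, hb, sub_zero]
    rw [gcoe]
    exact AlgHom.congr_fun hco x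

end
end

section
/- Let R = ⊕_{n≥0} R_n be an ℕ-graded ring equipped with a decreasing filtration R = F^0 ⊇ F^1 ⊇ F^2 ⊇ ⋯ by homogeneous two-sided ideals satisfying F^i · F^j ⊆ F^{i+j} for all i, j, and such that the filtration is finite in each degree: F^q ∩ R_n = 0 whenever q > n. If the associated graded ring gr R = ⊕_{q≥0} F^q / F^{q+1} is (left) Noetherian, then R is (left) Noetherian. -/
/-!
Taking leading homogeneous components for the grading sends each left ideal `I` of `R` to a
homogeneous left ideal `L(I)`, and `I ↦ L(I)` is strictly monotone (the Hilbert basis argument).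
A homogeneous left ideal `K` is sent to the left ideal of `gr R` generated by the symbols
`σ_q(K ∩ F^q)`; this ideal meets `gr_q R` exactly in `σ_q(K ∩ F^q)`, since the sum of these
pieces is already a left ideal and the sum is direct. So if `K ≤ K'` have the same image, a
homogeneous `x ∈ K' ∩ F^q` agrees with an element of `K` modulo `F^{q+1}`, and repeating this
pushes the error into `F^{n+1} ∩ R_n = 0`. Thus ascending chains in `R` embed strictly into
ascending chains in `gr R`.
-/

open DirectSum

theorem iSupIndep.inf_iSup_le_of_le {ι α : Type*} [CompleteLattice α] [IsModularLattice α]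
    {V B : ι → α} (hV : iSupIndep V) (hBV : B ≤ V) (q : ι) : V q ⊓ ⨆ i, B i ≤ B q := by
  have hdisj : Disjoint (V q) (⨆ (i) (_ : i ≠ q), B i) :=
    (hV q).mono_right (iSup₂_mono fun i _ => hBV i)
  rw [iSup_split_single B q, inf_comm, sup_inf_assoc_of_le _ (hBV q), hdisj.symm.eq_bot,
    sup_bot_eq]

theorem AddSubgroup.mul_mem_of_mem_iSup {G ι κ : Type*} [Ring G] {M : ι → AddSubgroup G}
    {N : κ → AddSubgroup G} {P : AddSubgroup G}
    (h : ∀ i j, ∀ a ∈ M i, ∀ b ∈ N j, a * b ∈ P) {a b : G}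
    (ha : a ∈ ⨆ i, M i) (hb : b ∈ ⨆ j, N j) : a * b ∈ P := by
  refine AddSubgroup.iSup_induction M (C := fun a => a * b ∈ P) ha (fun i a ha => ?_)
    (by simp) fun a a' ha ha' => by simpa [add_mul] using P.add_mem ha ha'
  refine AddSubgroup.iSup_induction N (C := fun b => a * b ∈ P) hb (fun j b hb => h i j a ha b hb)
    (by simp) fun b b' hb hb' => by simpa [mul_add] using P.add_mem hb hb'

section LeadingIdeal

variable {R : Type*} [Ring R] (𝒜 : ℕ → AddSubgroup R) [GradedRing 𝒜]

def leadingForms (I : Submodule R R) (N : ℕ) : AddSubgroup R where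
  carrier := {r | ∃ u ∈ I, (decompose 𝒜 u N : R) = r ∧ ∀ m, N < m → (decompose 𝒜 u m : R) = 0}
  zero_mem' := ⟨0, I.zero_mem, by simp, by simp⟩
  add_mem' := by
    rintro _ _ ⟨u, hu, rfl, hu'⟩ ⟨v, hv, rfl, hv'⟩
    exact ⟨u + v, I.add_mem hu hv, by simp, fun m hm => by simp [hu' m hm, hv' m hm]⟩
  neg_mem' := by
    rintro _ ⟨u, hu, rfl, hu'⟩
    refine ⟨-u, I.neg_mem hu, by rw [decompose_neg]; rfl, fun m hm => ?_⟩
    rw [decompose_neg, ← neg_eq_zero.mpr (hu' m hm)]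
    rfl

variable {𝒜}

theorem mul_mem_leadingForms {I : Submodule R R} {d N : ℕ} {r s : R} (hr : r ∈ 𝒜 d)
    (hd : d ≤ N) (hs : s ∈ leadingForms 𝒜 I (N - d)) : r * s ∈ leadingForms 𝒜 I N := by
  obtain ⟨u, hu, rfl, hu'⟩ := hs
  refine ⟨r * u, I.smul_mem r hu, coe_decompose_mul_of_left_mem_of_le 𝒜 hr hd, fun m hm => ?_⟩
  rw [coe_decompose_mul_of_left_mem_of_le 𝒜 hr (by omega), hu' (m - d) (by omega), mul_zero]

theorem decompose_mul_mem_leadingForms {I : Submodule R R} {N : ℕ} (a : R) {t : R}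
    (ht : ∀ n, (decompose 𝒜 t n : R) ∈ leadingForms 𝒜 I n) :
    (decompose 𝒜 (a * t) N : R) ∈ leadingForms 𝒜 I N := by
  classical
  rw [← sum_support_decompose 𝒜 a, Finset.sum_mul, decompose_sum, DFinsupp.finsetSum_apply,
    AddSubmonoidClass.coe_finsetSum]
  refine sum_mem fun d _ => ?_
  have hd := SetLike.coe_mem (decompose 𝒜 a d)
  by_cases hdN : d ≤ N
  · rw [coe_decompose_mul_of_left_mem_of_le 𝒜 hd hdN]
    exact mul_mem_leadingForms hd hdN (ht _)
  · rw [coe_decompose_mul_of_left_mem_of_not_le 𝒜 hd hdN]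
    exact zero_mem _

variable (𝒜)

def leadingIdeal (I : Submodule R R) : Submodule R R where
  carrier := {t | ∀ N, (decompose 𝒜 t N : R) ∈ leadingForms 𝒜 I N}
  zero_mem' N := by simp
  add_mem' hs ht N := by simpa using add_mem (hs N) (ht N)
  smul_mem' a _ ht _ := decompose_mul_mem_leadingForms a ht

variable {𝒜}

theorem leadingIdeal_mono : Monotone (leadingIdeal 𝒜) := by
  intro I I' h t ht N
  obtain ⟨u, hu, hut, hu'⟩ := ht N
  exact ⟨u, h hu, hut, hu'⟩

theorem mem_leadingIdeal_of_mem_leadingForms {I : Submodule R R} {N : ℕ} {r : R}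
    (hr : r ∈ 𝒜 N) (h : r ∈ leadingForms 𝒜 I N) : r ∈ leadingIdeal 𝒜 I := by
  intro M
  by_cases hM : M = N
  · subst hM
    rwa [decompose_of_mem_same 𝒜 hr]
  · rw [decompose_of_mem_ne 𝒜 hr (Ne.symm hM)]
    exact zero_mem _

theorem leadingIdeal_isHomogeneous (I : Submodule R R) :
    (leadingIdeal 𝒜 I).IsHomogeneous 𝒜 :=
  fun n _ ht => mem_leadingIdeal_of_mem_leadingForms (SetLike.coe_mem _) (ht n)

theorem le_of_leadingIdeal_le {I I' : Submodule R R} (hI : I ≤ I')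
    (hL : leadingIdeal 𝒜 I' ≤ leadingIdeal 𝒜 I) : I' ≤ I := by
  suffices key : ∀ N, ∀ x ∈ I', (∀ m, N ≤ m → (decompose 𝒜 x m : R) = 0) → x ∈ I by
    classical
    intro x hx
    obtain ⟨N, hN⟩ := Finset.exists_nat_subset_range (decompose 𝒜 x).support
    refine key N x hx fun m hm => ?_
    have hm' : m ∉ (decompose 𝒜 x).support := fun h => by
      have := Finset.mem_range.mp (hN h); omega
    rw [DFinsupp.notMem_support_iff.mp hm', ZeroMemClass.coe_zero]
  intro N
  induction N with
  | zero =>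
    intro x _ hx
    classical
    rw [← sum_support_decompose 𝒜 x]
    exact sum_mem fun n _ => by simp [hx n (Nat.zero_le n)]
  | succ N ih =>
    intro x hxI' hx
    have hlead : (decompose 𝒜 x N : R) ∈ leadingIdeal 𝒜 I' :=
      mem_leadingIdeal_of_mem_leadingForms (SetLike.coe_mem _) ⟨x, hxI', rfl, fun m hm => hx m hm⟩
    obtain ⟨u, hu, huN, hu'⟩ := hL hlead N
    rw [decompose_of_mem_same 𝒜 (SetLike.coe_mem _)] at huN
    have hxu : x - u ∈ I := by
      refine ih _ (I'.sub_mem hxI' (hI hu)) fun m hm => ?_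
      rw [decompose_sub, DirectSum.sub_apply, AddSubgroupClass.coe_sub]
      rcases hm.eq_or_lt with rfl | hlt
      · rw [huN, sub_self]
      · rw [hx m hlt, hu' m hlt, sub_self]
    simpa using I.add_mem hxu hu

theorem leadingIdeal_strictMono : StrictMono (leadingIdeal 𝒜) := fun _ _ h =>
  (leadingIdeal_mono h.le).lt_of_not_ge fun hL => h.not_ge (le_of_leadingIdeal_le h.le hL)

end LeadingIdeal

theorem DirectSum.IsInternal.addSubgroup_iSup_eq_top {ι M : Type*} [DecidableEq ι]
    [AddCommGroup M] {A : ι → AddSubgroup M} (h : IsInternal A) : iSup A = ⊤ := by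
  refine eq_top_iff.mpr fun a _ => ?_
  have ha : a ∈ ⨆ i, (A i).toAddSubmonoid :=
    h.addSubmonoid_iSup_eq_top (fun i => (A i).toAddSubmonoid) ▸ AddSubmonoid.mem_top a
  exact iSup_le (fun i => AddSubgroup.toAddSubmonoid_le.mpr (le_iSup A i)) ha

section AssociatedGraded

variable {R : Type*} [Ring R] {F : ℕ → AddSubgroup R} {G : Type*} [Ring G]
  (σ : ∀ q : ℕ, F q →+ G)

def grComponent (K : Submodule R R) (q : ℕ) : AddSubgroup G :=
  (K.toAddSubgroup.comap (F q).subtype).map (σ q)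

def grIdeal (K : Submodule R R) : Submodule G G :=
  Submodule.span G (⋃ q, (grComponent σ K q : Set G))

variable {σ}

theorem mem_grComponent {K : Submodule R R} {q : ℕ} {g : G} :
    g ∈ grComponent σ K q ↔ ∃ y : F q, (y : R) ∈ K ∧ σ q y = g := by
  simp only [grComponent, AddSubgroup.mem_map, AddSubgroup.mem_comap]
  rfl

theorem grComponent_le_range (K : Submodule R R) (q : ℕ) : grComponent σ K q ≤ (σ q).range :=
  AddSubgroup.map_le_range _ _

theorem grIdeal_mono : Monotone (grIdeal σ) := fun _ _ h =>
  Submodule.span_mono <| Set.iUnion_mono fun _ =>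
    AddSubgroup.map_mono (AddSubgroup.comap_mono h)

variable (hFmul : ∀ i j : ℕ, ∀ x y : R, x ∈ F i → y ∈ F j → x * y ∈ F (i + j))
  (hmul : ∀ (i j : ℕ) (x : F i) (y : F j),
    σ (i + j) ⟨(x : R) * (y : R), hFmul i j x y x.2 y.2⟩ = σ i x * σ j y)
include hmul

theorem mem_iSup_grComponent_of_mem_grIdeal (hσ : ⨆ q, (σ q).range = ⊤) {K : Submodule R R}
    {g : G} (hg : g ∈ grIdeal σ K) : g ∈ ⨆ q, grComponent σ K q := by
  induction hg using Submodule.span_induction with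
  | mem g hg =>
    obtain ⟨q, hq⟩ := Set.mem_iUnion.mp hg
    exact AddSubgroup.mem_iSup_of_mem q hq
  | zero => exact zero_mem _
  | add _ _ _ _ hg hg' => exact add_mem hg hg'
  | smul a g _ hg =>
    refine AddSubgroup.mul_mem_of_mem_iSup (fun i p a ha c hc => ?_)
      (hσ ▸ AddSubgroup.mem_top a) hg
    obtain ⟨r, rfl⟩ := ha
    obtain ⟨y, hy, rfl⟩ := mem_grComponent.mp hc
    rw [← hmul]
    exact AddSubgroup.mem_iSup_of_mem (i + p)
      (mem_grComponent.mpr ⟨_, K.smul_mem (r : R) hy, rfl⟩)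

theorem mem_grComponent_of_mem_grIdeal (hσ : DirectSum.IsInternal fun q => (σ q).range)
    {K : Submodule R R} {q : ℕ} (x : F q) (hx : σ q x ∈ grIdeal σ K) :
    σ q x ∈ grComponent σ K q :=
  hσ.addSubgroup_iSupIndep.inf_iSup_le_of_le (grComponent_le_range K) q
    ⟨⟨x, rfl⟩, mem_iSup_grComponent_of_mem_grIdeal hFmul hmul
      hσ.addSubgroup_iSup_eq_top hx⟩

theorem le_of_grIdeal_le {𝒜 : ℕ → AddSubgroup R} [GradedRing 𝒜] (hF0 : F 0 = ⊤)
    (hFhom : ∀ q n : ℕ, ∀ x ∈ F q, (decompose 𝒜 x n : R) ∈ F q)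
    (hFfin : ∀ q n : ℕ, n < q → ∀ x ∈ F q, x ∈ 𝒜 n → x = 0)
    (hker : ∀ (q : ℕ) (x : F q), σ q x = 0 → (x : R) ∈ F (q + 1))
    (hσ : DirectSum.IsInternal fun q => (σ q).range)
    {K K' : Submodule R R} (hK : K.IsHomogeneous 𝒜) (hK' : K'.IsHomogeneous 𝒜) (hKK' : K ≤ K')
    (hJ : grIdeal σ K' ≤ grIdeal σ K) : K' ≤ K := by
  suffices key : ∀ n q, ∀ x ∈ 𝒜 n, x ∈ K' → x ∈ F q → x ∈ K from fun x hx =>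
    (hK.mem_iff 𝒜).mpr fun n =>
      key n 0 _ (SetLike.coe_mem _) (hK' n hx) (hF0 ▸ AddSubgroup.mem_top _)
  intro n q x hxn hxK' hxF
  obtain ⟨k, hk⟩ : ∃ k, n < q + k := ⟨n + 1, by omega⟩
  induction k generalizing q x with
  | zero => simp [hFfin q n hk x hxF hxn]
  | succ k ih =>
    obtain ⟨y, hyK, hyx⟩ := mem_grComponent.mp <| mem_grComponent_of_mem_grIdeal hFmul hmul hσ
      ⟨x, hxF⟩ (hJ (Submodule.subset_span (Set.mem_iUnion_of_mem q ⟨⟨x, hxF⟩, hxK', rfl⟩)))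
    have hxy : x - y ∈ F (q + 1) := hker q (⟨x, hxF⟩ - y) (by rw [map_sub, hyx, sub_self])
    have hyn : (decompose 𝒜 (y : R) n : R) ∈ K := hK n hyK
    have hcomp : x - decompose 𝒜 (y : R) n = decompose 𝒜 (x - y) n := by
      rw [decompose_sub, DirectSum.sub_apply, AddSubgroupClass.coe_sub,
        decompose_of_mem_same 𝒜 hxn]
    have hrest : x - decompose 𝒜 (y : R) n ∈ K :=
      ih (q + 1) _ (sub_mem hxn (SetLike.coe_mem _)) (sub_mem hxK' (hKK' hyn))
        (hcomp ▸ hFhom _ _ _ hxy) (by omega)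
    simpa using K.add_mem hrest hyn

theorem grIdeal_lt_grIdeal {𝒜 : ℕ → AddSubgroup R} [GradedRing 𝒜] (hF0 : F 0 = ⊤)
    (hFhom : ∀ q n : ℕ, ∀ x ∈ F q, (decompose 𝒜 x n : R) ∈ F q)
    (hFfin : ∀ q n : ℕ, n < q → ∀ x ∈ F q, x ∈ 𝒜 n → x = 0)
    (hker : ∀ (q : ℕ) (x : F q), σ q x = 0 → (x : R) ∈ F (q + 1))
    (hσ : DirectSum.IsInternal fun q => (σ q).range)
    {K K' : Submodule R R} (hK : K.IsHomogeneous 𝒜) (hK' : K'.IsHomogeneous 𝒜) (hKK' : K < K') :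
    grIdeal σ K < grIdeal σ K' :=
  (grIdeal_mono hKK'.le).lt_of_not_ge fun hJ =>
    hKK'.not_ge (le_of_grIdeal_le hFmul hmul hF0 hFhom hFfin hker hσ hK hK' hKK'.le hJ)

end AssociatedGraded

/- `gr R` is modelled by a ring `G` with additive maps `σ q : F^q → G` of kernel `F^{q+1}`,
multiplicative across degrees, whose ranges form an internal direct sum decomposition of `G`. -/
theorem isNoetherianRing_of_associatedGraded
    {R : Type*} [Ring R] (𝒜 : ℕ → AddSubgroup R) [GradedRing 𝒜]
    (F : ℕ → AddSubgroup R)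
    (hF0 : F 0 = ⊤)
    (hFmul : ∀ i j : ℕ, ∀ x y : R, x ∈ F i → y ∈ F j → x * y ∈ F (i + j))
    (hFhom : ∀ q n : ℕ, ∀ x ∈ F q, (DirectSum.decompose 𝒜 x n : R) ∈ F q)
    (hFfin : ∀ q n : ℕ, n < q → ∀ x ∈ F q, x ∈ 𝒜 n → x = 0)
    (G : Type*) [Ring G]
    (σ : ∀ q : ℕ, F q →+ G)
    (hker : ∀ (q : ℕ) (x : F q), σ q x = 0 ↔ (x : R) ∈ F (q + 1))
    (hmul : ∀ (i j : ℕ) (x : F i) (y : F j),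
        σ (i + j) ⟨(x : R) * (y : R), hFmul i j x y x.2 y.2⟩ = σ i x * σ j y)
    (hinternal : DirectSum.IsInternal (fun q : ℕ => (σ q).range))
    (hG : IsNoetherianRing G) :
    IsNoetherianRing R := by
  have hchain : StrictMono fun I : Submodule R R => grIdeal σ (leadingIdeal 𝒜 I) :=
    fun _ _ h => grIdeal_lt_grIdeal hFmul hmul hF0 hFhom hFfin (fun q x => (hker q x).mp)
      hinternal (leadingIdeal_isHomogeneous _) (leadingIdeal_isHomogeneous _)
      (leadingIdeal_strictMono h)
  rw [isNoetherianRing_iff, isNoetherian_iff'] at hG ⊢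
  exact hchain.wellFoundedGT
end
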